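/- Assume (A), (A+), ℓ ∈ C¹(X) and ℓ Lipschitz on bounded subsets of X. Fix ū, u ∈ 𝒰 and x₀ ∈ X, let x_t := x^u_t denote the trajectory driven by u from x₀, and set g(t) := p̄_t(x_t) where p̄_t := ℓ ∘ Φ̄_{t,T}. Then g is Lipschitz continuous on I; in particular, g is absolutely continuous on I. -/

import Mathlib

/-!
By the semigroup law and uniqueness of mild solutions, `Φ̄` is a two-parameter flow, so
`g b - g a = ℓ (Φ̄_{b,T} (x_b)) - ℓ (Φ̄_{b,T} (Φ̄_{a,b} (x_a)))`. Banach–Steinhaus bounds `‖S_σ‖`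
uniformly on `[0, T]`; with Grönwall's inequality this keeps every trajectory in a fixed ball,
on which `ℓ` is Lipschitz, and makes `Φ̄_{b,T}` Lipschitz with a constant independent of `b`.
Finally `x_b` and `Φ̄_{a,b} (x_a)` both equal `S_{b-a} x_a` plus an integral over `[a, b]` of a
bounded integrand, so they differ by `O(b - a)`.
-/

open MeasureTheory Set Filter
open scoped RealInnerProductSpace

noncomputable section

/-- `φ` is a mild solution on `[s,T]` with initial data `(s, x)` for the semigroup `S`. -/
def IsMildSol {X : Type*} [NormedAddCommGroup X] [NormedSpace ℝ X]
    (T : ℝ) (S : ℝ → X →L[ℝ] X) (F : ℝ → X → X) (s : ℝ) (x : X) (φ : ℝ → X) : Prop :=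
  ContinuousOn φ (Set.Icc s T) ∧
    ∀ t ∈ Set.Icc s T, φ t = S (t - s) x + ∫ τ in s..t, S (t - τ) (F τ (φ τ))

open scoped Topology

theorem le_mul_exp_of_le_add_mul_integral {g : ℝ → ℝ} {s b A K : ℝ} (hK : 0 ≤ K)
    (hg : ContinuousOn g (Icc s b)) (hg0 : ∀ t ∈ Icc s b, 0 ≤ g t)
    (hle : ∀ t ∈ Icc s b, g t ≤ A + K * ∫ τ in s..t, g τ) :
    ∀ t ∈ Icc s b, g t ≤ A * Real.exp (K * (t - s)) := by
  intro t ht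
  have hsb : s ≤ b := ht.1.trans ht.2
  set h : ℝ → ℝ := fun t => A + K * ∫ τ in s..t, g τ
  have hA : 0 ≤ A := by
    simpa [h] using (hg0 s ⟨le_rfl, hsb⟩).trans (hle s ⟨le_rfl, hsb⟩)
  have hint : IntegrableOn g (uIcc s b) := by
    rw [uIcc_of_le hsb]; exact hg.integrableOn_Icc
  have hh : ContinuousOn h (Icc s b) := by
    refine continuousOn_const.add (continuousOn_const.mul ?_)
    simpa only [uIcc_of_le hsb] using intervalIntegral.continuousOn_primitive_interval hint
  have hIcc_mem : ∀ x ∈ Ico s b, Icc s b ∈ 𝓝[>] x := fun x hx =>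
    mem_of_superset (inter_mem_nhdsWithin _ (Iio_mem_nhds hx.2))
      fun τ hτ => ⟨hx.1.trans hτ.1.le, hτ.2.le⟩
  have hderiv : ∀ x ∈ Ico s b, HasDerivWithinAt h (K * g x) (Ici x) x := by
    intro x hx
    have hprim : HasDerivWithinAt (fun u => ∫ τ in s..u, g τ) (g x) (Ici x) x :=
      intervalIntegral.integral_hasDerivWithinAt_right
        ((hg.mono (Icc_subset_Icc le_rfl hx.2.le)).intervalIntegrable_of_Icc hx.1)
        ⟨Icc s b, hIcc_mem x hx, hg.aestronglyMeasurable measurableSet_Icc⟩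
        ((hg x ⟨hx.1, hx.2.le⟩).mono_of_mem_nhdsWithin (hIcc_mem x hx))
    exact (hprim.const_mul K).const_add A
  have hbound : ∀ x ∈ Ico s b, ‖K * g x‖ ≤ K * ‖h x‖ + 0 := by
    intro x hx
    have hgx := hg0 x ⟨hx.1, hx.2.le⟩
    have hgh := hle x ⟨hx.1, hx.2.le⟩
    rw [add_zero, Real.norm_of_nonneg (mul_nonneg hK hgx), Real.norm_of_nonneg (hgx.trans hgh)]
    exact mul_le_mul_of_nonneg_left hgh hK
  have hgronwall := norm_le_gronwallBound_of_norm_deriv_right_le hh hderiv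
    (show ‖h s‖ ≤ A by simp [h, abs_of_nonneg hA]) hbound t ht
  rw [gronwallBound_ε0] at hgronwall
  exact (hle t ht).trans ((le_abs_self _).trans hgronwall)

theorem tendsto_floor_mul_div_nat (x : ℝ) :
    Tendsto (fun n : ℕ => (⌊(n + 1 : ℝ) * x⌋ : ℝ) / (n + 1)) atTop (𝓝 x) := by
  have hlow : ∀ n : ℕ, x - 1 / ((n : ℝ) + 1) ≤ (⌊(n + 1 : ℝ) * x⌋ : ℝ) / (n + 1) := by
    intro n
    rw [le_div_iff₀ (by positivity), sub_mul, one_div_mul_cancel (by positivity), mul_comm]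
    linarith [Int.sub_one_lt_floor ((n + 1 : ℝ) * x)]
  have hup : ∀ n : ℕ, (⌊(n + 1 : ℝ) * x⌋ : ℝ) / (n + 1) ≤ x := by
    intro n
    rw [div_le_iff₀ (by positivity), mul_comm]
    exact Int.floor_le _
  refine tendsto_of_tendsto_of_tendsto_of_le_of_le ?_ tendsto_const_nhds hlow hup
  simpa using (tendsto_const_nhds (x := x)).sub tendsto_one_div_add_atTop_nhds_zero_nat

-- `φ` is approximated by the step functions `φ (⌊(n + 1) t⌋ / (n + 1))`, on each level set of
-- which the integrand is a single measurable section `h · x`.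
theorem aestronglyMeasurable_comp_of_continuous {X Y : Type*} [TopologicalSpace X]
    [TopologicalSpace Y] [TopologicalSpace.PseudoMetrizableSpace Y] {μ : Measure ℝ} {h : ℝ → X → Y}
    (hmeas : ∀ x, AEStronglyMeasurable (h · x) μ) (hcont : ∀ᵐ t ∂μ, Continuous (h t))
    {φ : ℝ → X} (hφ : Continuous φ) : AEStronglyMeasurable (fun t => h t (φ t)) μ := by
  set k : ℕ → ℝ → ℤ := fun n t => ⌊(n + 1 : ℝ) * t⌋
  have hstep : ∀ n, AEStronglyMeasurable (fun t => h t (φ (k n t / (n + 1)))) μ := by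
    intro n
    have hk : Measurable (k n) := Int.measurable_floor.comp (measurable_const_mul _)
    have hpiece : ∀ j : ℤ, AEStronglyMeasurable (fun t => h t (φ (k n t / (n + 1))))
        (μ.restrict (k n ⁻¹' {j})) := fun j =>
      (hmeas (φ (j / (n + 1)))).restrict.congr <|
        (ae_restrict_mem (hk (measurableSet_singleton j))).mono fun t ht => by
          rw [mem_preimage, mem_singleton_iff] at ht
          simp only [ht]
    have hcover : (⋃ j : ℤ, k n ⁻¹' {j}) = univ := iUnion_eq_univ_iff.2 fun t => ⟨k n t, rfl⟩
    simpa [hcover] using AEStronglyMeasurable.iUnion hpiece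
  refine aestronglyMeasurable_of_tendsto_ae atTop hstep ?_
  filter_upwards [hcont] with t ht
  exact (ht.tendsto _).comp ((hφ.tendsto t).comp (tendsto_floor_mul_div_nat t))

section OperatorFamily

variable {𝕜 ι E F : Type*} [NontriviallyNormedField 𝕜] [TopologicalSpace ι]
  [NormedAddCommGroup E] [NormedSpace 𝕜 E] [NormedAddCommGroup F] [NormedSpace 𝕜 F]

theorem exists_norm_le_of_continuousOn [CompleteSpace E] {S : ι → E →L[𝕜] F} {s : Set ι}
    (hs : IsCompact s) (hS : ∀ x, ContinuousOn (fun σ => S σ x) s) :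
    ∃ C, ∀ σ ∈ s, ‖S σ‖ ≤ C := by
  obtain ⟨C, hC⟩ := banach_steinhaus (g := fun σ : s => S σ) fun x => by
    obtain ⟨Cx, hCx⟩ := hs.exists_bound_of_continuousOn (hS x)
    exact ⟨Cx, fun σ => hCx σ σ.2⟩
  exact ⟨C, fun σ hσ => hC ⟨σ, hσ⟩⟩

theorem continuousOn_apply_of_norm_le {S : ι → E →L[𝕜] F} {s : Set ι} {C : ℝ}
    (hS : ∀ x, ContinuousOn (fun σ => S σ x) s) (hC : ∀ σ ∈ s, ‖S σ‖ ≤ C) :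
    ContinuousOn (fun p : ι × E => S p.1 p.2) (s ×ˢ univ) := by
  refine continuousOn_prod_of_continuousOn_lipschitzOnWith' _ (Real.toNNReal C)
    (fun σ hσ => (LipschitzWith.of_dist_le' fun x y => ?_).lipschitzOnWith) fun x _ => hS x
  rw [dist_eq_norm, dist_eq_norm, ← map_sub]
  exact (S σ).le_of_opNorm_le (hC σ hσ) _

theorem integrableOn_apply_comp {S : ℝ → E →L[𝕜] F} {T C : ℝ}
    (hS : ∀ x, ContinuousOn (fun σ => S σ x) (Icc 0 T)) (hC : ∀ σ ∈ Icc 0 T, ‖S σ‖ ≤ C)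
    {μ : Measure ℝ} {A : Set ℝ} (hA : MeasurableSet A) {σ : ℝ → ℝ} (hσ : Continuous σ)
    (hσA : MapsTo σ A (Icc 0 T)) {g : ℝ → E} (hg : IntegrableOn g A μ) :
    IntegrableOn (fun τ => S (σ τ) (g τ)) A μ := by
  obtain rfl | ⟨τ₀, hτ₀⟩ := A.eq_empty_or_nonempty
  · exact integrableOn_empty
  have hT : 0 ≤ T := (hσA hτ₀).1.trans (hσA hτ₀).2
  -- clamping the time into `[0, T]` makes the operator family jointly continuous on `ℝ × E`
  have hjoint : Continuous fun p : ℝ × E => S (projIcc 0 T hT (σ p.1)) p.2 :=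
    (continuousOn_apply_of_norm_le hS hC).comp_continuous
      (((continuous_projIcc (h := hT)).subtype_val.comp (hσ.comp continuous_fst)).prodMk
        continuous_snd) fun p => ⟨(projIcc 0 T hT _).2, mem_univ _⟩
  have hmeas : AEStronglyMeasurable (fun τ => S (σ τ) (g τ)) (μ.restrict A) :=
    (hjoint.comp_aestronglyMeasurable
      (aestronglyMeasurable_id.prodMk hg.aestronglyMeasurable)).congr
      ((ae_restrict_mem hA).mono fun τ hτ => by simp [projIcc_of_mem hT (hσA hτ)])
  refine Integrable.mono' (hg.norm.const_mul C) hmeas ?_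
  filter_upwards [ae_restrict_mem hA] with τ hτ
  exact (S (σ τ)).le_of_opNorm_le (hC _ (hσA hτ)) _

end OperatorFamily

section LipschitzField

variable {X Y : Type*} [NormedAddCommGroup X] [NormedAddCommGroup Y]

structure IsLipschitzField (T K : ℝ) (F : ℝ → X → Y) : Prop where
  nonneg : 0 ≤ K
  aestronglyMeasurable : ∀ y, AEStronglyMeasurable (F · y) (volume.restrict (Icc 0 T))
  lipschitz : ∀ᵐ τ ∂volume.restrict (Icc 0 T), ∀ y z, ‖F τ y - F τ z‖ ≤ K * ‖y - z‖
  norm_apply_zero_le : ∀ᵐ τ ∂volume.restrict (Icc 0 T), ‖F τ 0‖ ≤ K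

variable {T K : ℝ} {F : ℝ → X → Y}

theorem IsLipschitzField.norm_apply_le (hF : IsLipschitzField T K F) :
    ∀ᵐ τ ∂volume.restrict (Icc 0 T), ∀ y, ‖F τ y‖ ≤ K * (1 + ‖y‖) := by
  filter_upwards [hF.lipschitz, hF.norm_apply_zero_le] with τ hlip h0 y
  calc ‖F τ y‖ ≤ ‖F τ y - F τ 0‖ + ‖F τ 0‖ := norm_le_norm_sub_add _ _
    _ ≤ K * ‖y - 0‖ + K := add_le_add (hlip y 0) h0
    _ = K * (1 + ‖y‖) := by rw [sub_zero]; ring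

theorem IsLipschitzField.continuous (hF : IsLipschitzField T K F) :
    ∀ᵐ τ ∂volume.restrict (Icc 0 T), Continuous (F τ) := by
  filter_upwards [hF.lipschitz] with τ hlip
  exact (LipschitzWith.of_dist_le' fun y z => by simpa [dist_eq_norm] using hlip y z).continuous

theorem IsLipschitzField.integrableOn_comp (hF : IsLipschitzField T K F) {s : ℝ} (hs : 0 ≤ s)
    {w : ℝ → X} (hw : ContinuousOn w (Icc s T)) :
    IntegrableOn (fun τ => F τ (w τ)) (Icc s T) := by
  obtain hTs | hsT := lt_or_ge T s
  · simp [Icc_eq_empty_of_lt hTs]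
  have hsub : Icc s T ⊆ Icc 0 T := Icc_subset_Icc_left hs
  have hw' : Continuous fun τ => w (projIcc s T hsT τ) :=
    hw.comp_continuous (continuous_projIcc (h := hsT)).subtype_val fun τ => (projIcc s T hsT τ).2
  have hmeas : AEStronglyMeasurable (fun τ => F τ (w τ)) (volume.restrict (Icc s T)) :=
    (aestronglyMeasurable_comp_of_continuous (fun y => (hF.aestronglyMeasurable y).mono_set hsub)
      (ae_restrict_of_ae_restrict_of_subset hsub hF.continuous) hw').congr
      ((ae_restrict_mem measurableSet_Icc).mono fun τ hτ => by simp [projIcc_of_mem hsT hτ])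
  obtain ⟨R, hR⟩ := isCompact_Icc.exists_bound_of_continuousOn hw
  refine ⟨hmeas, .restrict_of_bounded (C := K * (1 + R)) (by simp) ?_⟩
  filter_upwards [ae_restrict_of_ae_restrict_of_subset hsub hF.norm_apply_le,
    ae_restrict_mem measurableSet_Icc] with τ hgrowth hτ
  exact (hgrowth _).trans (by gcongr; exacts [hF.nonneg, hR τ hτ])

end LipschitzField

section MildSolution

variable {X : Type*} [NormedAddCommGroup X] [NormedSpace ℝ X] {S : ℝ → X →L[ℝ] X}
  {T C K s : ℝ} {F : ℝ → X → X} {x y : X} {φ ψ : ℝ → X}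

theorem norm_integral_apply_le (hC : ∀ σ ∈ Icc 0 T, ‖S σ‖ ≤ C) {g : ℝ → X} {b : ℝ → ℝ}
    {p t : ℝ} (hp : 0 ≤ p) (hpt : p ≤ t) (htT : t ≤ T) (hb : IntervalIntegrable b volume p t)
    (hgb : ∀ᵐ τ ∂volume, τ ∈ Ioc p t → ‖g τ‖ ≤ b τ) :
    ‖∫ τ in p..t, S (t - τ) (g τ)‖ ≤ C * ∫ τ in p..t, b τ := by
  rw [← intervalIntegral.integral_const_mul]
  refine intervalIntegral.norm_integral_le_of_norm_le hpt ?_ (hb.const_mul C)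
  filter_upwards [hgb] with τ hτ hmem
  exact (S (t - τ)).le_of_opNorm_le_of_le (hC _ ⟨by linarith [hmem.2], by linarith [hmem.1]⟩)
    (hτ hmem)

namespace IsMildSol

theorem intervalIntegrable (hS : ∀ x, ContinuousOn (fun σ => S σ x) (Icc 0 T))
    (hC : ∀ σ ∈ Icc 0 T, ‖S σ‖ ≤ C) (hF : IsLipschitzField T K F) (hφ : IsMildSol T S F s x φ)
    (hs : 0 ≤ s) {p q t : ℝ} (hsp : s ≤ p) (hpq : p ≤ q) (hqt : q ≤ t) (htT : t ≤ T) :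
    IntervalIntegrable (fun τ => S (t - τ) (F τ (φ τ))) volume p q := by
  rw [intervalIntegrable_iff_integrableOn_Ioc_of_le hpq]
  refine integrableOn_apply_comp hS hC measurableSet_Ioc (σ := (t - ·))
    (continuous_const.sub continuous_id)
    (fun τ hτ => ⟨by linarith [hτ.2], by linarith [hτ.1]⟩)
    ((hF.integrableOn_comp hs hφ.1).mono_set fun τ hτ => ⟨by linarith [hτ.1], by linarith [hτ.2]⟩)

theorem norm_le (hC : ∀ σ ∈ Icc 0 T, ‖S σ‖ ≤ C) (hF : IsLipschitzField T K F)
    (hφ : IsMildSol T S F s x φ) (hs : 0 ≤ s) :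
    ∀ t ∈ Icc s T, ‖φ t‖ ≤ C * (‖x‖ + K * T) * Real.exp (C * K * T) := by
  intro t ht
  have hC0 : 0 ≤ C := (norm_nonneg _).trans (hC 0 ⟨le_rfl, hs.trans (ht.1.trans ht.2)⟩)
  have hCK : 0 ≤ C * K := mul_nonneg hC0 hF.nonneg
  have hgrowth := (ae_restrict_iff' measurableSet_Icc).1 hF.norm_apply_le
  have key : ∀ t' ∈ Icc s T,
      ‖φ t'‖ ≤ C * (‖x‖ + K * T) + C * K * ∫ τ in s..t', ‖φ τ‖ := by
    intro t' ht'
    have hφc : ContinuousOn (fun τ => ‖φ τ‖) (Icc s t') :=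
      (hφ.1.mono (Icc_subset_Icc le_rfl ht'.2)).norm
    have hint : IntervalIntegrable (fun τ => ‖φ τ‖) volume s t' :=
      hφc.intervalIntegrable_of_Icc ht'.1
    have hI : ‖∫ τ in s..t', S (t' - τ) (F τ (φ τ))‖ ≤ C * ∫ τ in s..t', K * (1 + ‖φ τ‖) := by
      refine norm_integral_apply_le hC hs ht'.1 ht'.2
        ((continuousOn_const.mul (continuousOn_const.add hφc)).intervalIntegrable_of_Icc ht'.1) ?_
      filter_upwards [hgrowth] with τ hτ hmem
      exact hτ ⟨hs.trans hmem.1.le, hmem.2.trans ht'.2⟩ _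
    have hlin : ∫ τ in s..t', K * (1 + ‖φ τ‖) = K * (t' - s) + K * ∫ τ in s..t', ‖φ τ‖ := by
      simp only [mul_add, mul_one]
      rw [intervalIntegral.integral_add intervalIntegrable_const (hint.const_mul K),
        intervalIntegral.integral_const, intervalIntegral.integral_const_mul, smul_eq_mul, mul_comm]
    have hT : C * K * (t' - s) ≤ C * K * T := mul_le_mul_of_nonneg_left (by linarith [ht'.2]) hCK
    calc ‖φ t'‖ ≤ ‖S (t' - s) x‖ + ‖∫ τ in s..t', S (t' - τ) (F τ (φ τ))‖ := by
          rw [hφ.2 t' ht']; exact norm_add_le _ _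
      _ ≤ C * ‖x‖ + C * (K * (t' - s) + K * ∫ τ in s..t', ‖φ τ‖) := by
          rw [← hlin]
          exact add_le_add
            ((S _).le_of_opNorm_le (hC _ ⟨by linarith [ht'.1], by linarith [ht'.2]⟩) x) hI
      _ ≤ C * (‖x‖ + K * T) + C * K * ∫ τ in s..t', ‖φ τ‖ := by linarith
  calc ‖φ t‖ ≤ C * (‖x‖ + K * T) * Real.exp (C * K * (t - s)) :=
        le_mul_exp_of_le_add_mul_integral hCK hφ.1.norm (fun _ _ => norm_nonneg _) key t ht
    _ ≤ C * (‖x‖ + K * T) * Real.exp (C * K * T) := by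
        have hA : 0 ≤ C * (‖x‖ + K * T) :=
          mul_nonneg hC0 (add_nonneg (norm_nonneg _)
            (mul_nonneg hF.nonneg (hs.trans (ht.1.trans ht.2))))
        gcongr
        linarith [ht.2]

theorem norm_sub_le (hS : ∀ x, ContinuousOn (fun σ => S σ x) (Icc 0 T))
    (hC : ∀ σ ∈ Icc 0 T, ‖S σ‖ ≤ C) (hF : IsLipschitzField T K F) (hφ : IsMildSol T S F s x φ)
    (hψ : IsMildSol T S F s y ψ) (hs : 0 ≤ s) :
    ∀ t ∈ Icc s T, ‖φ t - ψ t‖ ≤ C * Real.exp (C * K * T) * ‖x - y‖ := by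
  intro t ht
  have hC0 : 0 ≤ C := (norm_nonneg _).trans (hC 0 ⟨le_rfl, hs.trans (ht.1.trans ht.2)⟩)
  have hCK : 0 ≤ C * K := mul_nonneg hC0 hF.nonneg
  have hlip := (ae_restrict_iff' measurableSet_Icc).1 hF.lipschitz
  have key : ∀ t' ∈ Icc s T,
      ‖φ t' - ψ t'‖ ≤ C * ‖x - y‖ + C * K * ∫ τ in s..t', ‖φ τ - ψ τ‖ := by
    intro t' ht'
    have hdc : ContinuousOn (fun τ => ‖φ τ - ψ τ‖) (Icc s t') :=
      ((hφ.1.sub hψ.1).mono (Icc_subset_Icc le_rfl ht'.2)).norm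
    have hdiff : φ t' - ψ t' = S (t' - s) (x - y) +
        ∫ τ in s..t', S (t' - τ) (F τ (φ τ) - F τ (ψ τ)) := by
      simp_rw [map_sub]
      rw [intervalIntegral.integral_sub
        (hφ.intervalIntegrable hS hC hF hs le_rfl ht'.1 le_rfl ht'.2)
        (hψ.intervalIntegrable hS hC hF hs le_rfl ht'.1 le_rfl ht'.2), hφ.2 t' ht', hψ.2 t' ht']
      abel
    have hI : ‖∫ τ in s..t', S (t' - τ) (F τ (φ τ) - F τ (ψ τ))‖ ≤
        C * ∫ τ in s..t', K * ‖φ τ - ψ τ‖ := by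
      refine norm_integral_apply_le hC hs ht'.1 ht'.2
        ((continuousOn_const.mul hdc).intervalIntegrable_of_Icc ht'.1) ?_
      filter_upwards [hlip] with τ hτ hmem
      exact hτ ⟨hs.trans hmem.1.le, hmem.2.trans ht'.2⟩ _ _
    calc ‖φ t' - ψ t'‖ ≤ ‖S (t' - s) (x - y)‖ +
          ‖∫ τ in s..t', S (t' - τ) (F τ (φ τ) - F τ (ψ τ))‖ := by
          rw [hdiff]; exact norm_add_le _ _
      _ ≤ C * ‖x - y‖ + C * K * ∫ τ in s..t', ‖φ τ - ψ τ‖ := by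
          rw [mul_assoc, ← intervalIntegral.integral_const_mul]
          exact add_le_add
            ((S _).le_of_opNorm_le (hC _ ⟨by linarith [ht'.1], by linarith [ht'.2]⟩) _) hI
  calc ‖φ t - ψ t‖ ≤ C * ‖x - y‖ * Real.exp (C * K * (t - s)) :=
        le_mul_exp_of_le_add_mul_integral hCK (hφ.1.sub hψ.1).norm (fun _ _ => norm_nonneg _)
          key t ht
    _ ≤ C * ‖x - y‖ * Real.exp (C * K * T) := by
        have := hF.nonneg
        gcongr
        linarith [ht.2]
    _ = C * Real.exp (C * K * T) * ‖x - y‖ := by ring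

theorem apply_self (hS0 : S 0 = ContinuousLinearMap.id ℝ X) (hφ : IsMildSol T S F s x φ)
    (hsT : s ≤ T) : φ s = x := by
  simpa [hS0] using hφ.2 s ⟨le_rfl, hsT⟩

theorem eqOn (hS : ∀ x, ContinuousOn (fun σ => S σ x) (Icc 0 T))
    (hC : ∀ σ ∈ Icc 0 T, ‖S σ‖ ≤ C) (hF : IsLipschitzField T K F) (hφ : IsMildSol T S F s x φ)
    (hψ : IsMildSol T S F s x ψ) (hs : 0 ≤ s) : EqOn φ ψ (Icc s T) := fun t ht =>
  sub_eq_zero.1 <| norm_le_zero_iff.1 <| by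
    simpa using hφ.norm_sub_le hS hC hF hψ hs t ht

theorem sub_apply_eq_integral [CompleteSpace X]
    (hSadd : ∀ a b : ℝ, 0 ≤ a → 0 ≤ b → S (a + b) = (S a).comp (S b))
    (hS : ∀ x, ContinuousOn (fun σ => S σ x) (Icc 0 T))
    (hC : ∀ σ ∈ Icc 0 T, ‖S σ‖ ≤ C) (hF : IsLipschitzField T K F) (hφ : IsMildSol T S F s x φ)
    (hs : 0 ≤ s) {a b : ℝ} (hsa : s ≤ a) (hab : a ≤ b) (hbT : b ≤ T) :
    φ b - S (b - a) (φ a) = ∫ τ in a..b, S (b - τ) (F τ (φ τ)) := by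
  have hcomp : ∀ τ ≤ a, ∀ z, S (b - a) (S (a - τ) z) = S (b - τ) z := fun τ hτ z => by
    rw [← ContinuousLinearMap.comp_apply, ← hSadd _ _ (by linarith) (by linarith)]
    ring_nf
  have hpast : S (b - a) (φ a) = S (b - s) x + ∫ τ in s..a, S (b - τ) (F τ (φ τ)) := by
    rw [hφ.2 a ⟨hsa, hab.trans hbT⟩, map_add, hcomp s hsa,
      ← ContinuousLinearMap.intervalIntegral_comp_comm _
        (hφ.intervalIntegrable hS hC hF hs le_rfl hsa le_rfl (hab.trans hbT))]
    congr 1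
    refine intervalIntegral.integral_congr fun τ hτ => ?_
    rw [uIcc_of_le hsa] at hτ
    exact hcomp τ hτ.2 _
  rw [hφ.2 b ⟨hsa.trans hab, hbT⟩, hpast, ← intervalIntegral.integral_add_adjacent_intervals
    (hφ.intervalIntegrable hS hC hF hs le_rfl hsa hab hbT)
    (hφ.intervalIntegrable hS hC hF hs hsa hab le_rfl hbT)]
  abel

theorem restart [CompleteSpace X]
    (hSadd : ∀ a b : ℝ, 0 ≤ a → 0 ≤ b → S (a + b) = (S a).comp (S b))
    (hS : ∀ x, ContinuousOn (fun σ => S σ x) (Icc 0 T))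
    (hC : ∀ σ ∈ Icc 0 T, ‖S σ‖ ≤ C) (hF : IsLipschitzField T K F) (hφ : IsMildSol T S F s x φ)
    (hs : 0 ≤ s) {a : ℝ} (hsa : s ≤ a) : IsMildSol T S F a (φ a) φ :=
  ⟨hφ.1.mono (Icc_subset_Icc_left hsa), fun _ ht =>
    eq_add_of_sub_eq' (hφ.sub_apply_eq_integral hSadd hS hC hF hs hsa ht.1 ht.2)⟩

theorem norm_sub_apply_le [CompleteSpace X]
    (hSadd : ∀ a b : ℝ, 0 ≤ a → 0 ≤ b → S (a + b) = (S a).comp (S b))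
    (hS : ∀ x, ContinuousOn (fun σ => S σ x) (Icc 0 T))
    (hC : ∀ σ ∈ Icc 0 T, ‖S σ‖ ≤ C) (hF : IsLipschitzField T K F) (hφ : IsMildSol T S F s x φ)
    (hs : 0 ≤ s) {a b R : ℝ} (hsa : s ≤ a) (hab : a ≤ b) (hbT : b ≤ T)
    (hR : ∀ τ ∈ Icc a b, ‖φ τ‖ ≤ R) :
    ‖φ b - S (b - a) (φ a)‖ ≤ C * (K * (1 + R)) * (b - a) := by
  rw [hφ.sub_apply_eq_integral hSadd hS hC hF hs hsa hab hbT]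
  have hbound := norm_integral_apply_le (b := fun _ => K * (1 + R)) hC (hs.trans hsa) hab hbT
    intervalIntegrable_const <| by
      filter_upwards [(ae_restrict_iff' measurableSet_Icc).1 hF.norm_apply_le] with τ hτ hmem
      exact (hτ ⟨(hs.trans hsa).trans hmem.1.le, hmem.2.trans hbT⟩ _).trans
        (by gcongr; exacts [hF.nonneg, hR τ ⟨hmem.1.le, hmem.2⟩])
  rwa [intervalIntegral.integral_const, smul_eq_mul, mul_comm (b - a), ← mul_assoc] at hbound

end IsMildSol

theorem exists_norm_flow_sub_le [CompleteSpace X] (hS0 : S 0 = ContinuousLinearMap.id ℝ X)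
    (hSadd : ∀ a b : ℝ, 0 ≤ a → 0 ≤ b → S (a + b) = (S a).comp (S b))
    (hS : ∀ x, ContinuousOn (fun σ => S σ x) (Icc 0 T)) (hC : ∀ σ ∈ Icc 0 T, ‖S σ‖ ≤ C)
    {F' : ℝ → X → X} (hF' : IsLipschitzField T K F') (hF : IsLipschitzField T K F)
    {Φ : ℝ → ℝ → X → X} (hΦ : ∀ s ∈ Icc 0 T, ∀ x, IsMildSol T S F' s x (fun t => Φ s t x))
    {x₀ : X} (hφ : IsMildSol T S F 0 x₀ φ) :
    ∃ L, ∀ a ∈ Icc 0 T, ∀ b ∈ Icc 0 T, a ≤ b → ‖Φ b T (φ b) - Φ a T (φ a)‖ ≤ L * (b - a) := by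
  obtain ⟨R, hR⟩ := isCompact_Icc.exists_bound_of_continuousOn hφ.1
  set B := C * (R + K * T) * Real.exp (C * K * T)
  refine ⟨C * Real.exp (C * K * T) * (C * (K * (1 + R)) + C * (K * (1 + B))),
    fun a ha b hb hab => ?_⟩
  have hC0 : 0 ≤ C := (norm_nonneg _).trans (hC 0 ⟨le_rfl, ha.1.trans ha.2⟩)
  have hΦa := hΦ a ha (φ a)
  have hflow : Φ a T (φ a) = Φ b T (Φ a b (φ a)) :=
    (hΦa.restart hSadd hS hC hF' ha.1 hab).eqOn hS hC hF' (hΦ b hb _) hb.1 ⟨hb.2, le_rfl⟩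
  have hB : ∀ τ ∈ Icc a b, ‖Φ a τ (φ a)‖ ≤ B := fun τ hτ =>
    (hΦa.norm_le hC hF' ha.1 τ ⟨hτ.1, hτ.2.trans hb.2⟩).trans
      (by simp only [B]; gcongr; exact hR a ha)
  have hincr : ‖φ b - Φ a b (φ a)‖ ≤ (C * (K * (1 + R)) + C * (K * (1 + B))) * (b - a) := by
    have hφab := hφ.norm_sub_apply_le hSadd hS hC hF le_rfl ha.1 hab hb.2
      fun τ hτ => hR τ ⟨ha.1.trans hτ.1, hτ.2.trans hb.2⟩
    have hΦab := hΦa.norm_sub_apply_le hSadd hS hC hF' ha.1 le_rfl hab hb.2 hB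
    rw [hΦa.apply_self hS0 ha.2] at hΦab
    calc ‖φ b - Φ a b (φ a)‖ = ‖(φ b - S (b - a) (φ a)) - (Φ a b (φ a) - S (b - a) (φ a))‖ := by
          rw [sub_sub_sub_cancel_right]
      _ ≤ ‖φ b - S (b - a) (φ a)‖ + ‖Φ a b (φ a) - S (b - a) (φ a)‖ := norm_sub_le _ _
      _ ≤ _ := by linarith
  calc ‖Φ b T (φ b) - Φ a T (φ a)‖ = ‖Φ b T (φ b) - Φ b T (Φ a b (φ a))‖ := by rw [hflow]
    _ ≤ C * Real.exp (C * K * T) * ‖φ b - Φ a b (φ a)‖ :=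
        (hΦ b hb _).norm_sub_le hS hC hF' (hΦ b hb _) hb.1 T ⟨hb.2, le_rfl⟩
    _ ≤ C * Real.exp (C * K * T) * ((C * (K * (1 + R)) + C * (K * (1 + B))) * (b - a)) :=
        mul_le_mul_of_nonneg_left hincr (mul_nonneg hC0 (Real.exp_pos _).le)
    _ = _ := by ring

end MildSolution

theorem isLipschitzField_add_apply {X E : Type*} [NormedAddCommGroup X] [NormedSpace ℝ X]
    [NormedAddCommGroup E] [NormedSpace ℝ E] {f : ℝ → X → X} {G : ℝ → X → E →L[ℝ] X}
    {v : ℝ → E} {T Mf MG R : ℝ} (hMf : 0 ≤ Mf) (hMG : 0 ≤ MG) (hR : 0 ≤ R)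
    (hfmeas : ∀ x, AEStronglyMeasurable (fun t => f t x) (volume.restrict (Icc 0 T)))
    (hGmeas : ∀ x, AEStronglyMeasurable (fun t => G t x) (volume.restrict (Icc 0 T)))
    (hA : ∀ᵐ t ∂(volume.restrict (Icc 0 T)),
        (∀ x y : X, ‖f t x - f t y‖ ≤ Mf * ‖x - y‖) ∧
        (∀ x y : X, ‖G t x - G t y‖ ≤ MG * ‖x - y‖) ∧
        ‖f t 0‖ ≤ Mf ∧ ‖G t 0‖ ≤ MG)
    (hv : AEStronglyMeasurable v (volume.restrict (Icc 0 T)))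
    (hvR : ∀ᵐ t ∂(volume.restrict (Icc 0 T)), ‖v t‖ ≤ R) :
    IsLipschitzField T (Mf + MG * R) (fun t y => f t y + G t y (v t)) where
  nonneg := add_nonneg hMf (mul_nonneg hMG hR)
  aestronglyMeasurable y := (hfmeas y).add
    (isBoundedBilinearMap_apply.continuous.comp_aestronglyMeasurable ((hGmeas y).prodMk hv))
  lipschitz := by
    filter_upwards [hA, hvR] with t hAt hvt y z
    calc ‖f t y + G t y (v t) - (f t z + G t z (v t))‖
        = ‖(f t y - f t z) + (G t y - G t z) (v t)‖ := by
          rw [sub_apply]; congr 1; abel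
      _ ≤ Mf * ‖y - z‖ + MG * ‖y - z‖ * R :=
          norm_add_le_of_le (hAt.1 y z) ((G t y - G t z).le_of_opNorm_le_of_le (hAt.2.1 y z) hvt)
      _ = (Mf + MG * R) * ‖y - z‖ := by ring
  norm_apply_zero_le := by
    filter_upwards [hA, hvR] with t hAt hvt
    exact norm_add_le_of_le hAt.2.2.1 ((G t 0).le_of_opNorm_le_of_le hAt.2.2.2 hvt)

theorem exists_abs_comp_sub_le {X : Type*} [NormedAddCommGroup X] {γ : ℝ → X} {ℓ : X → ℝ}
    {p q L : ℝ} (hγ : ∀ a ∈ Icc p q, ∀ b ∈ Icc p q, a ≤ b → ‖γ b - γ a‖ ≤ L * (b - a))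
    (hℓ : ∀ B : Set X, Bornology.IsBounded B →
      ∃ K : ℝ, ∀ x ∈ B, ∀ y ∈ B, |ℓ x - ℓ y| ≤ K * ‖x - y‖) :
    ∃ L' : ℝ, 0 ≤ L' ∧ ∀ a ∈ Icc p q, ∀ b ∈ Icc p q, |ℓ (γ b) - ℓ (γ a)| ≤ L' * |b - a| := by
  have hγ' : ∀ a ∈ Icc p q, ∀ b ∈ Icc p q, ‖γ b - γ a‖ ≤ L * |b - a| := by
    intro a ha b hb
    rcases le_total a b with hab | hba
    · rw [abs_of_nonneg (sub_nonneg.2 hab)]; exact hγ a ha b hb hab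
    · rw [norm_sub_rev, abs_sub_comm, abs_of_nonneg (sub_nonneg.2 hba)]; exact hγ b hb a ha hba
  have hlip : LipschitzOnWith (Real.toNNReal L) γ (Icc p q) :=
    LipschitzOnWith.of_dist_le' fun a ha b hb => by
      simpa [dist_eq_norm, Real.dist_eq, norm_sub_rev, abs_sub_comm] using hγ' b hb a ha
  obtain ⟨K, hK⟩ := hℓ _ (isCompact_Icc.image_of_continuousOn hlip.continuousOn).isBounded
  refine ⟨max K 0 * max L 0, by positivity, fun a ha b hb => ?_⟩
  calc |ℓ (γ b) - ℓ (γ a)| ≤ K * ‖γ b - γ a‖ :=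
        hK _ (mem_image_of_mem γ hb) _ (mem_image_of_mem γ ha)
    _ ≤ max K 0 * (max L 0 * |b - a|) := by
        gcongr
        · exact le_max_left _ _
        · exact (hγ' a ha b hb).trans (by gcongr; exact le_max_left _ _)
    _ = max K 0 * max L 0 * |b - a| := by ring

theorem backward_cost_along_trajectory_lipschitz_general
    {X : Type*} [NormedAddCommGroup X] [NormedSpace ℝ X] [CompleteSpace X]
    {m : ℕ} {T : ℝ}
    (S : ℝ → X →L[ℝ] X)
    (hS0 : S 0 = ContinuousLinearMap.id ℝ X)
    (hSadd : ∀ a b : ℝ, 0 ≤ a → 0 ≤ b → S (a + b) = (S a).comp (S b))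
    (hScont : ∀ x : X, ContinuousOn (fun σ => S σ x) (Set.Ici (0 : ℝ)))
    (U : Set (EuclideanSpace ℝ (Fin m))) (hUcpt : IsCompact U)
    (f : ℝ → X → X) (G : ℝ → X → EuclideanSpace ℝ (Fin m) →L[ℝ] X)
    {Mf MG : ℝ} (hMf : 0 ≤ Mf) (hMG : 0 ≤ MG)
    (hfmeas : ∀ x : X,
      AEStronglyMeasurable (fun t => f t x) (volume.restrict (Set.Icc (0:ℝ) T)))
    (hGmeas : ∀ x : X,
      AEStronglyMeasurable (fun t => G t x) (volume.restrict (Set.Icc (0:ℝ) T)))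
    (hA : ∀ᵐ t ∂(volume.restrict (Set.Icc (0:ℝ) T)),
        (∀ x y : X, ‖f t x - f t y‖ ≤ Mf * ‖x - y‖) ∧
        (∀ x y : X, ‖G t x - G t y‖ ≤ MG * ‖x - y‖) ∧
        ‖f t 0‖ ≤ Mf ∧ ‖G t 0‖ ≤ MG)
    (ubar : ℝ → EuclideanSpace ℝ (Fin m))
    (hubar_meas : AEStronglyMeasurable ubar (volume.restrict (Set.Icc (0:ℝ) T)))
    (hubar_mem : ∀ᵐ t ∂(volume.restrict (Set.Icc (0:ℝ) T)), ubar t ∈ U)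
    (Φ : ℝ → ℝ → X → X)
    (hΦ : ∀ s ∈ Set.Icc (0:ℝ) T, ∀ x : X,
      IsMildSol T S (fun τ y => f τ y + G τ y (ubar τ)) s x (fun t => Φ s t x))
    (ℓ : X → ℝ)
    (hℓLip : ∀ B : Set X, Bornology.IsBounded B →
      ∃ K : ℝ, ∀ x ∈ B, ∀ y ∈ B, |ℓ x - ℓ y| ≤ K * ‖x - y‖)
    (u : ℝ → EuclideanSpace ℝ (Fin m))
    (hu_meas : AEStronglyMeasurable u (volume.restrict (Set.Icc (0:ℝ) T)))
    (hu_mem : ∀ᵐ t ∂(volume.restrict (Set.Icc (0:ℝ) T)), u t ∈ U)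
    (x₀ : X) (xu : ℝ → X)
    (hxu : IsMildSol T S (fun τ y => f τ y + G τ y (u τ)) 0 x₀ xu)
 :
    ∃ L : ℝ, 0 ≤ L ∧ ∀ a ∈ Set.Icc (0:ℝ) T, ∀ b ∈ Set.Icc (0:ℝ) T,
      |ℓ (Φ b T (xu b)) - ℓ (Φ a T (xu a))| ≤ L * |b - a| := by
  have hS : ∀ x, ContinuousOn (fun σ => S σ x) (Icc 0 T) :=
    fun x => (hScont x).mono Icc_subset_Ici_self
  obtain ⟨C, hC⟩ := exists_norm_le_of_continuousOn isCompact_Icc hS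
  obtain ⟨R, hR0, hR⟩ := hUcpt.isBounded.exists_pos_norm_le
  have hUR : ∀ {v : ℝ → EuclideanSpace ℝ (Fin m)}, (∀ᵐ t ∂(volume.restrict (Icc 0 T)), v t ∈ U) →
      ∀ᵐ t ∂(volume.restrict (Icc 0 T)), ‖v t‖ ≤ R :=
    fun hv => hv.mono fun t ht => hR _ ht
  have hFbar := isLipschitzField_add_apply hMf hMG hR0.le hfmeas hGmeas hA hubar_meas
    (hUR hubar_mem)
  have hFu := isLipschitzField_add_apply hMf hMG hR0.le hfmeas hGmeas hA hu_meas (hUR hu_mem)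
  obtain ⟨L, hL⟩ := exists_norm_flow_sub_le hS0 hSadd hS hC hFbar hFu hΦ hxu
  exact exists_abs_comp_sub_le hL hℓLip

/-- with (A), (A+), `ℓ ∈ C¹(X)` Lipschitz on bounded sets, the function
`g(t) = p̄_t(x^u_t) = ℓ(Φ̄_{t,T}(x^u_t))` is Lipschitz on `I = [0,T]`; in particular it
is absolutely continuous on `I`. -/
theorem backward_cost_along_trajectory_lipschitz
    {X : Type*} [NormedAddCommGroup X] [NormedSpace ℝ X] [CompleteSpace X]
    {m : ℕ} {T : ℝ} (hT : 0 < T)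
    (S : ℝ → X →L[ℝ] X)
    (hS0 : S 0 = ContinuousLinearMap.id ℝ X)
    (hSadd : ∀ a b : ℝ, 0 ≤ a → 0 ≤ b → S (a + b) = (S a).comp (S b))
    (hScont : ∀ x : X, ContinuousOn (fun σ => S σ x) (Set.Ici (0 : ℝ)))
    (U : Set (EuclideanSpace ℝ (Fin m))) (hUcpt : IsCompact U) (hUcvx : Convex ℝ U)
    (f : ℝ → X → X) (G : ℝ → X → EuclideanSpace ℝ (Fin m) →L[ℝ] X)
    {Mf MG : ℝ} (hMf : 0 ≤ Mf) (hMG : 0 ≤ MG)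
    (hfmeas : ∀ x : X,
      AEStronglyMeasurable (fun t => f t x) (volume.restrict (Set.Icc (0:ℝ) T)))
    (hGmeas : ∀ x : X,
      AEStronglyMeasurable (fun t => G t x) (volume.restrict (Set.Icc (0:ℝ) T)))
    (hA : ∀ᵐ t ∂(volume.restrict (Set.Icc (0:ℝ) T)),
        (∀ x y : X, ‖f t x - f t y‖ ≤ Mf * ‖x - y‖) ∧
        (∀ x y : X, ‖G t x - G t y‖ ≤ MG * ‖x - y‖) ∧
        ‖f t 0‖ ≤ Mf ∧ ‖G t 0‖ ≤ MG)
    {M : ℝ} (hM : 0 ≤ M)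
    (hDfmeas : ∀ x : X,
      AEStronglyMeasurable (fun t => fderiv ℝ (f t) x) (volume.restrict (Set.Icc (0:ℝ) T)))
    (hDGmeas : ∀ x : X,
      AEStronglyMeasurable (fun t => fderiv ℝ (G t) x) (volume.restrict (Set.Icc (0:ℝ) T)))
    (hAplus : ∀ᵐ t ∂(volume.restrict (Set.Icc (0:ℝ) T)),
        ContDiff ℝ 1 (f t) ∧ ContDiff ℝ 1 (G t) ∧
        (∀ x : X, ‖fderiv ℝ (f t) x‖ ≤ M) ∧
        (∀ x : X, ‖fderiv ℝ (G t) x‖ ≤ M) ∧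
        (∀ x y : X, ‖fderiv ℝ (f t) x - fderiv ℝ (f t) y‖ ≤ M * ‖x - y‖) ∧
        (∀ x y : X, ‖fderiv ℝ (G t) x - fderiv ℝ (G t) y‖ ≤ M * ‖x - y‖))
    (ubar : ℝ → EuclideanSpace ℝ (Fin m))
    (hubar_meas : AEStronglyMeasurable ubar (volume.restrict (Set.Icc (0:ℝ) T)))
    (hubar_mem : ∀ᵐ t ∂(volume.restrict (Set.Icc (0:ℝ) T)), ubar t ∈ U)
    (Φ : ℝ → ℝ → X → X)
    (hΦ : ∀ s ∈ Set.Icc (0:ℝ) T, ∀ x : X,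
      IsMildSol T S (fun τ y => f τ y + G τ y (ubar τ)) s x (fun t => Φ s t x))
    (ℓ : X → ℝ) (hℓ : ContDiff ℝ 1 ℓ)
    (hℓLip : ∀ B : Set X, Bornology.IsBounded B →
      ∃ K : ℝ, ∀ x ∈ B, ∀ y ∈ B, |ℓ x - ℓ y| ≤ K * ‖x - y‖)
    (u : ℝ → EuclideanSpace ℝ (Fin m))
    (hu_meas : AEStronglyMeasurable u (volume.restrict (Set.Icc (0:ℝ) T)))
    (hu_mem : ∀ᵐ t ∂(volume.restrict (Set.Icc (0:ℝ) T)), u t ∈ U)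
    (x₀ : X) (xu : ℝ → X)
    (hxu : IsMildSol T S (fun τ y => f τ y + G τ y (u τ)) 0 x₀ xu)
 :
    ∃ L : ℝ, 0 ≤ L ∧ ∀ a ∈ Set.Icc (0:ℝ) T, ∀ b ∈ Set.Icc (0:ℝ) T,
      |ℓ (Φ b T (xu b)) - ℓ (Φ a T (xu a))| ≤ L * |b - a| :=
  backward_cost_along_trajectory_lipschitz_general S hS0 hSadd hScont U hUcpt f G hMf hMG hfmeas
    hGmeas hA ubar hubar_meas hubar_mem Φ hΦ ℓ hℓLip u hu_meas hu_mem x₀ xu hxu
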